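/- arXiv:1409.4920 — 5 statements merged into one kernel-verified Lean document; each statement's English description precedes it below -/
import Mathlib

section
/- Let h ≥ 1, L ≥ 1, and M ≥ 1 be natural numbers and let f be a uniformly random function from Fin h to Fin L (each of the L^h functions equally likely). Then the expected number of elements i of Fin h such that the fiber f⁻¹({f(i)}) has at most M elements equals L·∑_{x=1}^{M} x·C(h,x)·(1/L)^x·(1 − 1/L)^{h−x}. -/
/-!
Summing over slots, `∑_f #{i | |f⁻¹(f i)| ∈ [1, M]} = ∑_s ∑_f [|f⁻¹ s| ∈ [1, M]] · |f⁻¹ s|`.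
For a fixed slot `s`, the number of `f` with `|f⁻¹ s| = c` is `C(h,c) (L-1)^(h-c)`: it is the
coefficient of `X^c` in `∑_f X^|f⁻¹ s| = ∏_i ∑_t X^[t = s] = (X + (L-1))^h`. Dividing by `L^h`
turns `C(h,c) (L-1)^(h-c)` into the binomial probability `C(h,c) (1/L)^c (1-1/L)^(h-c)`.
-/

open Finset Polynomial

lemma Finset.sum_ite_mem_eq_sum_card_nsmul {ι M : Type*} [AddCommMonoid M] [DecidableEq M]
    (s : Finset ι) (t : Finset M) (k : ι → M) :
    ∑ x ∈ s, (if k x ∈ t then k x else 0) = ∑ c ∈ t, #{x ∈ s | k x = c} • c := by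
  rw [← sum_filter, ← sum_fiberwise_eq_sum_filter]
  refine sum_congr rfl fun c _ => ?_
  rw [← sum_const]
  exact sum_congr rfl fun x hx => by rw [(mem_filter.1 hx).2]

section FiberCard

variable {α β : Type*} [Fintype α] [DecidableEq β]

def fiberCard (f : α → β) (b : β) : ℕ := #{a | f a = b}

lemma one_le_fiberCard (f : α → β) (a : α) : 1 ≤ fiberCard f (f a) :=
  card_pos.2 ⟨a, by simp⟩

lemma card_filter_fiberCard_mem [Fintype β] (f : α → β) (t : Finset ℕ) :
    #{a | fiberCard f (f a) ∈ t} = ∑ b, if fiberCard f b ∈ t then fiberCard f b else 0 := by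
  rw [card_eq_sum_card_fiberwise (f := f) (t := univ) (fun _ _ => mem_coe.2 (mem_univ _))]
  refine sum_congr rfl fun b _ => ?_
  rw [filter_filter]
  split_ifs with hb
  · congr 1; ext a; simp +contextual [hb]
  · rw [card_eq_zero, filter_eq_empty_iff]
    rintro a - ⟨ha, rfl⟩
    exact hb ha

variable [Fintype β] [DecidableEq α]

lemma sum_X_pow_fiberCard (b : β) :
    ∑ f : α → β, (X : ℕ[X]) ^ fiberCard f b = (X + C (Fintype.card β - 1)) ^ Fintype.card α := by
  have hterm (f : α → β) : (X : ℕ[X]) ^ fiberCard f b = ∏ a, if f a = b then X else 1 := by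
    rw [prod_ite, prod_const, prod_const, one_pow, mul_one, fiberCard]
  have hslot : ∑ t : β, (if t = b then (X : ℕ[X]) else 1) = X + C (Fintype.card β - 1) := by
    simp [sum_ite, filter_eq', filter_ne', card_erase_of_mem]
  simp_rw [hterm]
  rw [← Fintype.prod_sum (fun _ t => if t = b then X else 1), hslot, prod_const, card_univ]

lemma card_filter_fiberCard_eq (b : β) (c : ℕ) :
    #{f : α → β | fiberCard f b = c}
      = (Fintype.card α).choose c * (Fintype.card β - 1) ^ (Fintype.card α - c) := by
  have := congrArg (coeff · c) (sum_X_pow_fiberCard (α := α) b)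
  simp only [finsetSum_coeff, coeff_X_pow, coeff_X_add_C_pow] at this
  simp_rw [card_filter, eq_comm (a := fiberCard _ b), this, mul_comm, Nat.cast_id]

lemma sum_card_filter_fiberCard_mem (t : Finset ℕ) :
    ∑ f : α → β, #{a | fiberCard f (f a) ∈ t}
      = Fintype.card β *
          ∑ c ∈ t, c * (Fintype.card α).choose c * (Fintype.card β - 1) ^ (Fintype.card α - c) := by
  simp_rw [card_filter_fiberCard_mem]
  rw [sum_comm]
  simp_rw [sum_ite_mem_eq_sum_card_nsmul, card_filter_fiberCard_eq, smul_eq_mul]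
  rw [sum_const, card_univ, smul_eq_mul]
  congr 1
  exact sum_congr rfl fun c _ => by ring

end FiberCard

lemma cast_mul_choose_mul_pow_div_pow (n c L : ℕ) (hL : 1 ≤ L) :
    ((c * n.choose c * (L - 1) ^ (n - c) : ℕ) : ℝ) / (L : ℝ) ^ n
      = c * n.choose c * (1 / (L : ℝ)) ^ c * (1 - 1 / (L : ℝ)) ^ (n - c) := by
  rcases le_or_gt c n with hc | hc
  · have hL0 : (L : ℝ) ≠ 0 := by positivity
    obtain ⟨m, rfl⟩ := Nat.exists_eq_add_of_le hc
    rw [Nat.add_sub_cancel_left, pow_add]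
    push_cast [hL]
    rw [one_sub_div hL0, div_pow, div_pow, one_pow, div_eq_iff (by positivity)]
    field_simp
  · simp [Nat.choose_eq_zero_of_lt hc]

theorem expected_successful_packets_mpr_general (h L M : ℕ) (hL : 1 ≤ L) :
    (∑ f : Fin h → Fin L,
        ((univ.filter fun i : Fin h =>
            (univ.filter fun j : Fin h => f j = f i).card ≤ M).card : ℝ)) / (L : ℝ) ^ h
      = (L : ℝ) * ∑ x ∈ Finset.Icc 1 M,
          (x : ℝ) * (h.choose x : ℝ) * (1 / (L : ℝ)) ^ x * (1 - 1 / (L : ℝ)) ^ (h - x) := by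
  have hslot (f : Fin h → Fin L) :
      (univ.filter fun i : Fin h => (univ.filter fun j : Fin h => f j = f i).card ≤ M)
        = univ.filter fun i => fiberCard f (f i) ∈ Icc 1 M :=
    filter_congr fun i _ => by rw [mem_Icc, and_iff_right (one_le_fiberCard f i)]; rfl
  simp_rw [hslot]
  rw [← Nat.cast_sum, sum_card_filter_fiberCard_mem, Fintype.card_fin, Fintype.card_fin,
    Nat.cast_mul, Nat.cast_sum, mul_div_assoc, sum_div]
  simp_rw [cast_mul_choose_mul_pow_div_pow h _ L hL]

/-- With `h` packets placed uniformly at random into `L` slots (a uniformly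
random `f : Fin h → Fin L`), the expected number of packets `i` whose slot contains at
most `M` packets equals `L * ∑_{x=1}^{M} x C(h,x) (1/L)^x (1 - 1/L)^(h-x)`. -/
theorem expected_successful_packets_mpr (h L M : ℕ) (hh : 1 ≤ h) (hL : 1 ≤ L) (hM : 1 ≤ M) :
    (∑ f : Fin h → Fin L,
        ((univ.filter fun i : Fin h =>
            (univ.filter fun j : Fin h => f j = f i).card ≤ M).card : ℝ)) / (L : ℝ) ^ h
      = (L : ℝ) * ∑ x ∈ Finset.Icc 1 M,
          (x : ℝ) * (h.choose x : ℝ) * (1 / (L : ℝ)) ^ x * (1 - 1 / (L : ℝ)) ^ (h - x) :=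
  expected_successful_packets_mpr_general h L M hL
end

section
/- For natural numbers V and u, the number of functions f from Fin u to Fin V such that no element of Fin V has a fiber of exactly one element equals G(V,u) := V^u + ∑_{t=1}^{u} (−1)^t · (1/t!) · (∏_{j=0}^{t−1} (u−j)(V−j)) · (V−t)^{u−t}. -/
open Finset

set_option maxHeartbeats 1000000


section
variable {V u : ℕ} (T : Finset (Fin V))

noncomputable def mkFun (σ : {x : Fin V // x ∈ T} ↪ Fin u)
    (g : {i : Fin u // ∀ l, σ l ≠ i} → {l : Fin V // l ∉ T}) : Fin u → Fin V :=
  fun i => if h : ∃ l, σ l = i then (h.choose).1 else (g ⟨i, fun l hl => h ⟨l, hl⟩⟩).1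

lemma mkFun_fiber (σ : {x : Fin V // x ∈ T} ↪ Fin u)
    (g : {i : Fin u // ∀ l, σ l ≠ i} → {l : Fin V // l ∉ T}) (l : {x : Fin V // x ∈ T}) :
    (univ.filter fun i : Fin u => mkFun T σ g i = l.1) = {σ l} := by
  classical
  ext i
  simp only [mem_filter, mem_univ, true_and, mem_singleton]
  unfold mkFun
  by_cases h : ∃ l', σ l' = i
  · rw [dif_pos h]
    have hspec := h.choose_spec
    constructor
    · intro hv
      have : h.choose = l := Subtype.ext hv
      rw [← hspec, this]
    · intro hv
      have h2 : σ h.choose = σ l := by rw [hspec, hv]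
      rw [σ.injective h2]
  · rw [dif_neg h]
    constructor
    · intro hv
      exact absurd (hv ▸ (g ⟨i, fun l' hl' => h ⟨l', hl'⟩⟩).2) (not_not_intro l.2)
    · intro hv
      exact absurd ⟨l, hv.symm⟩ h

lemma mkFun_prop (σ : {x : Fin V // x ∈ T} ↪ Fin u)
    (g : {i : Fin u // ∀ l, σ l ≠ i} → {l : Fin V // l ∉ T}) :
    ∀ l ∈ T, (univ.filter fun i : Fin u => mkFun T σ g i = l).card = 1 := by
  intro l hl
  rw [mkFun_fiber T σ g ⟨l, hl⟩, card_singleton]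

noncomputable def Phi :
    (Σ σ : {x : Fin V // x ∈ T} ↪ Fin u,
        ({i : Fin u // ∀ l, σ l ≠ i} → {l : Fin V // l ∉ T})) →
      {f : Fin u → Fin V // ∀ l ∈ T, (univ.filter fun i : Fin u => f i = l).card = 1} :=
  fun x => ⟨mkFun T x.1 x.2, mkFun_prop T x.1 x.2⟩

lemma Phi_bij : Function.Bijective (Phi (u := u) T) := by
  classical
  constructor
  · rintro ⟨σ, g⟩ ⟨σ', g'⟩ h
    have hf : mkFun T σ g = mkFun T σ' g' := congrArg Subtype.val h
    have hσ : σ = σ' := by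
      apply DFunLike.ext
      intro l
      have h1 := mkFun_fiber T σ g l
      have h2 := mkFun_fiber T σ' g' l
      rw [hf, h2] at h1
      exact (Finset.singleton_injective h1).symm
    subst hσ
    have hg : g = g' := by
      funext i
      apply Subtype.ext
      have h1 : mkFun T σ g i.1 = (g i).1 := by
        unfold mkFun
        rw [dif_neg (fun h' : ∃ l, σ l = i.1 => i.2 h'.choose h'.choose_spec)]
      have h2 : mkFun T σ g' i.1 = (g' i).1 := by
        unfold mkFun
        rw [dif_neg (fun h' : ∃ l, σ l = i.1 => i.2 h'.choose h'.choose_spec)]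
      rw [← h1, hf, h2]
    rw [hg]
  · rintro ⟨f, hf⟩
    have hx : ∀ l : {x : Fin V // x ∈ T}, ∃ a, (univ.filter fun i : Fin u => f i = l.1) = {a} :=
      fun l => Finset.card_eq_one.mp (hf l.1 l.2)
    set σf : {x : Fin V // x ∈ T} → Fin u := fun l => (hx l).choose with hσf
    have hmem : ∀ l, f (σf l) = l.1 := by
      intro l
      have hs := (hx l).choose_spec
      have h2 : σf l ∈ ({σf l} : Finset (Fin u)) := mem_singleton_self _
      rw [← hs, mem_filter] at h2
      exact h2.2
    have hinj : Function.Injective σf := by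
      intro l l' h
      apply Subtype.ext
      rw [← hmem l, ← hmem l', h]
    refine ⟨⟨⟨σf, hinj⟩, fun i => ⟨f i.1, ?_⟩⟩, ?_⟩
    · intro hmemT
      have h2 : i.1 ∈ (univ.filter fun j : Fin u => f j = f i.1) := by
        rw [mem_filter]; exact ⟨mem_univ _, rfl⟩
      rw [(hx ⟨f i.1, hmemT⟩).choose_spec, mem_singleton] at h2
      exact i.2 ⟨f i.1, hmemT⟩ h2.symm
    · apply Subtype.ext
      funext i
      show mkFun T ⟨σf, hinj⟩ _ i = f i
      unfold mkFun
      by_cases h : ∃ l, (⟨σf, hinj⟩ : {x : Fin V // x ∈ T} ↪ Fin u) l = i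
      · rw [dif_pos h]
        have hs : σf h.choose = i := h.choose_spec
        have h3 := hmem h.choose
        rw [hs] at h3
        exact h3.symm
      · rw [dif_neg h]
end

theorem count_exact (V u : ℕ) (T : Finset (Fin V)) :
    (univ.filter fun f : Fin u → Fin V =>
        ∀ l ∈ T, (univ.filter fun i : Fin u => f i = l).card = 1).card
      = u.descFactorial T.card * (V - T.card) ^ (u - T.card) := by
  classical
  have h0 := Fintype.card_of_bijective (Phi_bij (u := u) T)
  rw [Fintype.card_subtype] at h0
  have hT : Fintype.card {x : Fin V // x ∈ T} = T.card := by
    simp [Fintype.card_subtype]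
  have hC : Fintype.card {l : Fin V // l ∉ T} = V - T.card := by
    rw [Fintype.card_subtype_compl (p := fun l : Fin V => l ∈ T), Fintype.card_fin, hT]
  have hfib : ∀ σ : {x : Fin V // x ∈ T} ↪ Fin u,
      Fintype.card {i : Fin u // ∀ l, σ l ≠ i} = u - T.card := by
    intro σ
    rw [Fintype.card_subtype]
    have he : (univ.filter fun i : Fin u => ∀ l, σ l ≠ i) = univ \ univ.image σ := by
      ext i
      simp [eq_comm]
    rw [he, card_sdiff_of_subset (subset_univ _), card_image_of_injective _ σ.injective]
    simp [card_univ, hT]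
  rw [Fintype.card_sigma] at h0
  have hterm : ∀ σ : {x : Fin V // x ∈ T} ↪ Fin u,
      Fintype.card ({i : Fin u // ∀ l, σ l ≠ i} → {l : Fin V // l ∉ T})
        = (V - T.card) ^ (u - T.card) := by
    intro σ
    rw [Fintype.card_fun, hC, hfib]
  rw [Finset.sum_congr rfl fun σ _ => hterm σ, Finset.sum_const, card_univ,
    Fintype.card_embedding_eq, hT, Fintype.card_fin, smul_eq_mul] at h0
  rw [← h0]

/-- The inclusion–exclusion expression `G(V,u)` from the paper: the number of ways to
place `u` balls into `V` bins so that no bin contains exactly one ball. -/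
noncomputable def G (V u : ℕ) : ℝ :=
  (V : ℝ) ^ u +
    ∑ t ∈ Finset.Icc 1 u,
      (-1 : ℝ) ^ t * (1 / (Nat.factorial t : ℝ)) *
        (∏ j ∈ Finset.range t, (((u : ℝ) - (j : ℝ)) * ((V : ℝ) - (j : ℝ)))) *
        ((V : ℝ) - (t : ℝ)) ^ (u - t)

lemma cast_descF (n t : ℕ) (h : t ≤ n) :
    (n.descFactorial t : ℝ) = ∏ j ∈ range t, ((n : ℝ) - (j : ℝ)) := by
  rw [Nat.descFactorial_eq_prod_range, Nat.cast_prod]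
  refine prod_congr rfl fun j hj => ?_
  rw [mem_range] at hj
  rw [Nat.cast_sub (le_of_lt (lt_of_lt_of_le hj h))]

lemma final_sum (V u : ℕ) :
    ∑ m ∈ range (V + 1),
      (V.choose m) • ((-1 : ℝ) ^ m * ((u.descFactorial m * (V - m) ^ (u - m) : ℕ) : ℝ))
      = G V u := by
  have hG : G V u = ∑ t ∈ range (u + 1),
      (-1 : ℝ) ^ t * (1 / (Nat.factorial t : ℝ)) *
        (∏ j ∈ Finset.range t, (((u : ℝ) - (j : ℝ)) * ((V : ℝ) - (j : ℝ)))) *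
        ((V : ℝ) - (t : ℝ)) ^ (u - t) := by
    have hins : range (u + 1) = insert 0 (Icc 1 u) := by
      ext x; simp [Nat.lt_succ_iff]; omega
    rw [hins, sum_insert (by simp), G]
    simp
  rw [hG]
  set m0 := min u V with hm0
  have h1 : ∑ m ∈ range (V + 1),
      (V.choose m) • ((-1 : ℝ) ^ m * ((u.descFactorial m * (V - m) ^ (u - m) : ℕ) : ℝ))
      = ∑ m ∈ range (m0 + 1),
      (V.choose m) • ((-1 : ℝ) ^ m * ((u.descFactorial m * (V - m) ^ (u - m) : ℕ) : ℝ)) := by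
    refine (sum_subset ?_ ?_).symm
    · exact range_subset_range.mpr (by omega)
    · intro x hx hnx
      rw [mem_range] at hx
      rw [mem_range, not_lt] at hnx
      have hux : u < x := by omega
      rw [Nat.descFactorial_eq_zero_iff_lt.mpr hux]
      simp
  have h2 : ∑ t ∈ range (u + 1),
      (-1 : ℝ) ^ t * (1 / (Nat.factorial t : ℝ)) *
        (∏ j ∈ Finset.range t, (((u : ℝ) - (j : ℝ)) * ((V : ℝ) - (j : ℝ)))) *
        ((V : ℝ) - (t : ℝ)) ^ (u - t)
      = ∑ t ∈ range (m0 + 1),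
      (-1 : ℝ) ^ t * (1 / (Nat.factorial t : ℝ)) *
        (∏ j ∈ Finset.range t, (((u : ℝ) - (j : ℝ)) * ((V : ℝ) - (j : ℝ)))) *
        ((V : ℝ) - (t : ℝ)) ^ (u - t) := by
    refine (sum_subset (range_subset_range.mpr (by omega)) ?_).symm
    intro x hx hnx
    rw [mem_range] at hx
    rw [mem_range, not_lt] at hnx
    have hVx : V < x := by omega
    have : (∏ j ∈ Finset.range x, (((u : ℝ) - (j : ℝ)) * ((V : ℝ) - (j : ℝ)))) = 0 := by
      apply prod_eq_zero (mem_range.mpr hVx)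
      simp
    rw [this]
    ring
  rw [h1, h2]
  refine sum_congr rfl fun t ht => ?_
  rw [mem_range, Nat.lt_succ_iff, hm0, le_min_iff] at ht
  obtain ⟨htu, htV⟩ := ht
  rw [prod_mul_distrib, ← cast_descF u t htu, ← cast_descF V t htV]
  rw [Nat.cast_mul, Nat.cast_pow, Nat.cast_sub htV]
  have hfac : (V.descFactorial t : ℝ) = (Nat.factorial t : ℝ) * (V.choose t : ℝ) := by
    rw [← Nat.cast_mul, ← Nat.descFactorial_eq_factorial_mul_choose]
  rw [hfac, nsmul_eq_mul]
  have hfne : (Nat.factorial t : ℝ) ≠ 0 := Nat.cast_ne_zero.mpr (Nat.factorial_ne_zero t)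
  field_simp

/-- the number of functions `f : Fin u → Fin V` with no singleton fiber
equals `G(V,u)`. -/
theorem card_no_singleton_fiber_eq_G (V u : ℕ) :
    ((univ.filter fun f : Fin u → Fin V =>
        ∀ l : Fin V, (univ.filter fun i : Fin u => f i = l).card ≠ 1).card : ℝ)
      = G V u := by
  classical
  have step1 : ((univ.filter fun f : Fin u → Fin V =>
        ∀ l : Fin V, (univ.filter fun i : Fin u => f i = l).card ≠ 1).card : ℝ)
      = ∑ f : Fin u → Fin V, ∏ l : Fin V,
          ((1 : ℝ) - if (univ.filter fun i : Fin u => f i = l).card = 1 then 1 else 0) := by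
    rw [card_filter]
    push_cast
    refine sum_congr rfl fun f _ => ?_
    by_cases hf : ∀ l : Fin V, (univ.filter fun i : Fin u => f i = l).card ≠ 1
    · rw [if_pos hf, eq_comm]
      refine prod_eq_one fun l _ => ?_
      rw [if_neg (hf l)]; ring
    · rw [if_neg hf, eq_comm]
      push_neg at hf
      obtain ⟨l, hl⟩ := hf
      refine prod_eq_zero (mem_univ l) ?_
      rw [if_pos hl]; ring
  rw [step1]
  have step3 : ∀ f : Fin u → Fin V,
      (∏ l : Fin V, ((1 : ℝ) - if (univ.filter fun i : Fin u => f i = l).card = 1 then 1 else 0))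
      = ∑ T ∈ (univ : Finset (Fin V)).powerset,
          (-1 : ℝ) ^ T.card * ∏ l ∈ T,
            (if (univ.filter fun i : Fin u => f i = l).card = 1 then (1 : ℝ) else 0) := by
    intro f
    rw [Finset.prod_sub]
    refine sum_congr rfl fun T _ => ?_
    rw [prod_const_one, mul_one]
  simp_rw [step3]
  rw [Finset.sum_comm]
  have step5 : ∀ T : Finset (Fin V),
      (∑ f : Fin u → Fin V, (-1 : ℝ) ^ T.card * ∏ l ∈ T,
          (if (univ.filter fun i : Fin u => f i = l).card = 1 then (1 : ℝ) else 0))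
      = (-1 : ℝ) ^ T.card * ((u.descFactorial T.card * (V - T.card) ^ (u - T.card) : ℕ) : ℝ) := by
    intro T
    rw [← mul_sum]
    congr 1
    simp_rw [prod_boole]
    rw [← count_exact V u T, card_filter]
    push_cast
    refine sum_congr rfl fun f _ => ?_
    by_cases h : ∀ l ∈ T, (univ.filter fun i : Fin u => f i = l).card = 1 <;> simp [h]
  simp_rw [step5]
  rw [sum_powerset_apply_card
    (f := fun m => (-1 : ℝ) ^ m * ((u.descFactorial m * (V - m) ^ (u - m) : ℕ) : ℝ))]
  rw [card_univ, Fintype.card_fin]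
  exact final_sum V u
end

section
/- Let h, L, k be natural numbers with 0 < k < min(h, L). The number of functions f from Fin h to Fin L having exactly k singleton fibers (i.e., exactly k elements of Fin L whose preimage under f has exactly one element) equals C(L,k)·C(h,k)·k!·G(L−k, h−k), where G(V,u) := V^u + ∑_{t=1}^{u} (−1)^t · (1/t!) · (∏_{j=0}^{t−1} (u−j)(V−j)) · (V−t)^{u−t}. Consequently, when h packets are each placed independently and uniformly at random into L slots, the probability ξ_{hk} that exactly k slots contain exactly one packet equals C(L,k)C(h,k)k!·G(L−k,h−k)/L^h. -/
/-!
A function with exactly `k` singleton fibers is determined by its set `K` of singleton bins, the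
preimage `A` of `K` (a `k`-set of balls), a bijection `A → K`, and a map from the remaining
`h - k` balls to the remaining `L - k` bins without singleton fibers; this gives the factor
`C(L,k) C(h,k) k!`. Maps from `u` balls to `V` bins without singleton fibers are counted by
inclusion–exclusion over the set `T` of bins forced to be singletons: there are
`u (u-1) ⋯ (u-t+1) (V-t)^(u-t)` maps for which the `t = #T` bins of `T` are singletons, and the
alternating sum of these, grouped by `t`, is `G(V,u)`.
-/

open Finset

theorem Nat.cast_descFactorial_eq_prod_range {R : Type*} [CommRing R] (n t : ℕ) :
    (n.descFactorial t : R) = ∏ j ∈ range t, ((n : R) - j) := by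
  rw [← descPochhammer_eval_eq_descFactorial, descPochhammer_eval_eq_prod_range]

theorem G_term_eq (V u t : ℕ) :
    (-1 : ℝ) ^ t * (1 / (t.factorial : ℝ)) * (∏ j ∈ range t, (((u : ℝ) - j) * ((V : ℝ) - j))) *
        ((V : ℝ) - t) ^ (u - t) =
      (-1 : ℝ) ^ t * V.choose t * u.descFactorial t * ((V - t : ℕ) : ℝ) ^ (u - t) := by
  rw [prod_mul_distrib, ← Nat.cast_descFactorial_eq_prod_range,
    ← Nat.cast_descFactorial_eq_prod_range]
  rcases le_or_gt t V with htV | hVt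
  · rw [Nat.cast_sub htV, Nat.descFactorial_eq_factorial_mul_choose V t]
    field_simp
    push_cast
    ring
  · simp [Nat.choose_eq_zero_of_lt hVt, Nat.descFactorial_of_lt hVt]

theorem G_eq_sum_range (V u : ℕ) :
    G V u = ∑ t ∈ range (u + 1),
      (-1 : ℝ) ^ t * V.choose t * u.descFactorial t * ((V - t : ℕ) : ℝ) ^ (u - t) := by
  rw [G, range_eq_Ico, sum_eq_sum_Ico_succ_bot u.succ_pos, zero_add, Nat.succ_eq_add_one,
    Ico_add_one_right_eq_Icc]
  congr 1
  · simp
  · exact sum_congr rfl fun t _ => G_term_eq V u t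

theorem G_eq_sum_range_of_min_lt {V u N : ℕ} (hN : min V u < N) :
    G V u = ∑ t ∈ range N,
      (-1 : ℝ) ^ t * V.choose t * u.descFactorial t * ((V - t : ℕ) : ℝ) ^ (u - t) := by
  have hvanish : ∀ t ≥ min V u + 1,
      (-1 : ℝ) ^ t * V.choose t * u.descFactorial t * ((V - t : ℕ) : ℝ) ^ (u - t) = 0 := by
    intro t ht
    rcases lt_or_ge V t with hVt | hVt
    · simp [Nat.choose_eq_zero_of_lt hVt]
    · simp [Nat.descFactorial_of_lt (show u < t by omega)]
  rw [G_eq_sum_range, eventually_constant_sum hvanish (by omega : min V u + 1 ≤ u + 1),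
    eventually_constant_sum hvanish hN]

section Fibers

variable {α β : Type*} [Fintype α] [DecidableEq β]

def singletonFibers [Fintype β] (f : α → β) : Finset β := {y | #{x | f x = y} = 1}

theorem card_fiber_subtype {p : α → Prop} [Fintype (Subtype p)] {f : α → β} {y : β}
    (hp : ∀ x, f x = y → p x) : #{x : Subtype p | f x = y} = #{x | f x = y} := by
  rw [← card_map (Function.Embedding.subtype p)]
  congr 1
  ext x
  simp only [mem_map, mem_filter_univ, Function.Embedding.subtype_apply]
  exact ⟨fun ⟨x', hx', hxx'⟩ => hxx' ▸ hx', fun hx => ⟨⟨x, hp x hx⟩, hx, rfl⟩⟩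

theorem Function.bijective_iff_forall_card_fiber_eq_one {g : α → β} :
    Function.Bijective g ↔ ∀ y, #{x | g x = y} = 1 := by
  simp only [Function.bijective_iff_existsUnique, Fintype.existsUnique_iff_card_one]

theorem card_preimage_of_forall_card_fiber_eq_one {f : α → β} {T : Finset β}
    (hT : ∀ y ∈ T, #{x | f x = y} = 1) : #{x | f x ∈ T} = #T := by
  rw [card_eq_sum_card_fiberwise (s := {x | f x ∈ T}) (t := T) fun x hx => (mem_filter.1 hx).2]
  rw [sum_congr rfl fun y hy => ?_, sum_const, smul_eq_mul, mul_one]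
  rw [filter_filter, ← hT y hy]
  congr 1
  ext x
  simp only [mem_filter_univ, and_iff_right_iff_imp]
  rintro rfl
  exact hy

def preimageSplitEquiv [DecidableEq α] (A : Finset α) (K : Finset β) :
    {f : α → β // ∀ x, f x ∈ K ↔ x ∈ A} ≃
      ({x // x ∈ A} → {y // y ∈ K}) × ({x // x ∉ A} → {y // y ∉ K}) where
  toFun f := (fun x => ⟨f.1 x, (f.2 x).2 x.2⟩, fun x => ⟨f.1 x, fun h => x.2 ((f.2 x).1 h)⟩)
  invFun g := ⟨fun x => if h : x ∈ A then g.1 ⟨x, h⟩ else g.2 ⟨x, h⟩, fun x => by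
    by_cases h : x ∈ A
    · simp [h]
    · simpa [h] using (g.2 ⟨x, h⟩).2⟩
  left_inv f := by
    ext x
    by_cases h : x ∈ A <;> simp [h]
  right_inv g := by
    ext x <;> simp [x.2]

theorem card_fiber_preimageSplitEquiv_fst [DecidableEq α] (A : Finset α) (K : Finset β)
    (f : {f : α → β // ∀ x, f x ∈ K ↔ x ∈ A}) (y : {y // y ∈ K}) :
    #{x | (preimageSplitEquiv A K f).1 x = y} = #{x | f.1 x = y} := by
  simp only [Subtype.ext_iff]
  exact card_fiber_subtype (f := f.1) (y := y.1) fun x hx => (f.2 x).1 (hx ▸ y.2)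

theorem card_fiber_preimageSplitEquiv_snd [DecidableEq α] (A : Finset α) (K : Finset β)
    (f : {f : α → β // ∀ x, f x ∈ K ↔ x ∈ A}) (y : {y // y ∉ K}) :
    #{x | (preimageSplitEquiv A K f).2 x = y} = #{x | f.1 x = y} := by
  simp only [Subtype.ext_iff]
  exact card_fiber_subtype fun x hx hA => y.2 (by rw [← hx]; exact (f.2 x).2 hA)

end Fibers

section Counting

variable {α β : Type*} [Fintype α] [Fintype β] [DecidableEq α] [DecidableEq β]

theorem card_filter_preimage_eq_and_card_fiber {A : Finset α} {K : Finset β} (hAK : #A = #K)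
    (Q : ℕ → Prop) [DecidablePred Q] :
    #{f : α → β | (∀ x, f x ∈ K ↔ x ∈ A) ∧
        (∀ y ∈ K, #{x | f x = y} = 1) ∧ ∀ y ∉ K, Q #{x | f x = y}} =
      (#K).factorial * #{g : {x // x ∉ A} → {y // y ∉ K} | ∀ y, Q #{x | g x = y}} := by
  have e : {f : α → β // (∀ x, f x ∈ K ↔ x ∈ A) ∧
        (∀ y ∈ K, #{x | f x = y} = 1) ∧ ∀ y ∉ K, Q #{x | f x = y}} ≃
      {g : {x // x ∈ A} → {y // y ∈ K} // Function.Bijective g} ×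
        {g : {x // x ∉ A} → {y // y ∉ K} // ∀ y, Q #{x | g x = y}} :=
    (Equiv.subtypeSubtypeEquivSubtypeInter _ _).symm.trans <|
      ((preimageSplitEquiv A K).subtypeEquiv fun f => by
        rw [Function.bijective_iff_forall_card_fiber_eq_one]
        simp only [card_fiber_preimageSplitEquiv_fst, card_fiber_preimageSplitEquiv_snd,
          Subtype.forall]).trans Equiv.subtypeProdEquivProd
  have hcard : Fintype.card {x // x ∈ A} = Fintype.card {y // y ∈ K} := by simpa using hAK
  rw [← Fintype.card_subtype, Fintype.card_congr e, Fintype.card_prod,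
    Fintype.card_congr Equiv.bijectiveEquiv, Fintype.card_equiv (Fintype.equivOfCardEq hcard),
    Fintype.card_coe, hAK, Fintype.card_subtype]

theorem card_filter_forall_mem_card_fiber_eq_one_and (T : Finset β) (Q : ℕ → Prop)
    [DecidablePred Q] :
    #{f : α → β | (∀ y ∈ T, #{x | f x = y} = 1) ∧ ∀ y ∉ T, Q #{x | f x = y}} =
      ∑ A ∈ powersetCard #T (univ : Finset α),
        (#T).factorial * #{g : {x // x ∉ A} → {y // y ∉ T} | ∀ y, Q #{x | g x = y}} := by
  rw [card_eq_sum_card_fiberwise (f := fun f : α → β => ({x | f x ∈ T} : Finset α))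
    (t := powersetCard #T univ) fun f hf => mem_powersetCard.2
      ⟨subset_univ _, card_preimage_of_forall_card_fiber_eq_one (mem_filter.1 hf).2.1⟩]
  refine sum_congr rfl fun A hA => ?_
  rw [← card_filter_preimage_eq_and_card_fiber (mem_powersetCard.1 hA).2 Q, filter_filter]
  congr 1
  refine filter_congr fun f _ => ?_
  simp only [Finset.ext_iff, mem_filter_univ]
  tauto

theorem card_filter_forall_mem_card_fiber_eq_one (T : Finset β) :
    #{f : α → β | ∀ y ∈ T, #{x | f x = y} = 1} =
      (Fintype.card α).descFactorial #T * (Fintype.card β - #T) ^ (Fintype.card α - #T) := by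
  have h := card_filter_forall_mem_card_fiber_eq_one_and (α := α) T fun _ => True
  simp only [implies_true, and_true, filter_true] at h
  rw [h, sum_const_nat (m := (#T).factorial * (Fintype.card β - #T) ^ (Fintype.card α - #T))
    fun A hA => ?_]
  · rw [card_powersetCard, card_univ, Nat.descFactorial_eq_factorial_mul_choose]
    ring
  · rw [card_univ, Fintype.card_fun, Fintype.card_subtype_compl, Fintype.card_subtype_compl,
      Fintype.card_coe, Fintype.card_coe, (mem_powersetCard.1 hA).2]

theorem card_filter_forall_card_fiber_ne_one :
    (#{f : α → β | ∀ y, #{x | f x = y} ≠ 1} : ℝ) = G (Fintype.card β) (Fintype.card α) := by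
  have hIE := inclusion_exclusion_card_inf_compl (univ : Finset β)
    fun y => ({f : α → β | #{x | f x = y} = 1} : Finset (α → β))
  have hinf : (univ.inf fun y => ({f : α → β | #{x | f x = y} = 1} : Finset (α → β))ᶜ) =
      ({f : α → β | ∀ y, #{x | f x = y} ≠ 1} : Finset (α → β)) := by
    ext f
    simp [mem_inf]
  have hsub : ∀ T : Finset β, T.inf (fun y => ({f : α → β | #{x | f x = y} = 1} : Finset _)) =
      ({f : α → β | ∀ y ∈ T, #{x | f x = y} = 1} : Finset (α → β)) := by
    intro T
    ext f
    simp [mem_inf]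
  simp only [hinf, hsub, card_filter_forall_mem_card_fiber_eq_one] at hIE
  rw [sum_powerset_apply_card (fun m => (-1 : ℤ) ^ m * ((Fintype.card α).descFactorial m *
    (Fintype.card β - m) ^ (Fintype.card α - m) : ℕ)), card_univ] at hIE
  rw [G_eq_sum_range_of_min_lt (N := Fintype.card β + 1) (by omega)]
  exact_mod_cast hIE.trans (sum_congr rfl fun t _ => by push_cast; ring)

theorem card_filter_singletonFibers_eq (K : Finset β) :
    (#{f : α → β | singletonFibers f = K} : ℝ) =
      (Fintype.card α).choose #K * (#K).factorial *
        G (Fintype.card β - #K) (Fintype.card α - #K) := by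
  have hK : ({f : α → β | singletonFibers f = K} : Finset (α → β)) =
      ({f | (∀ y ∈ K, #{x | f x = y} = 1) ∧ ∀ y ∉ K, #{x | f x = y} ≠ 1} : Finset (α → β)) := by
    refine filter_congr fun f _ => ?_
    simp only [singletonFibers, Finset.ext_iff, mem_filter_univ]
    exact ⟨fun h => ⟨fun y hy => (h y).2 hy, fun y hy h1 => hy ((h y).1 h1)⟩,
      fun h y => ⟨fun h1 => by_contra fun hy => h.2 y hy h1, h.1 y⟩⟩
  have hterm : ∀ A ∈ powersetCard #K (univ : Finset α),
      (((#K).factorial * #{g : {x // x ∉ A} → {y // y ∉ K} | ∀ y, #{x | g x = y} ≠ 1} : ℕ) : ℝ) =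
        (#K).factorial * G (Fintype.card β - #K) (Fintype.card α - #K) := by
    intro A hA
    rw [Nat.cast_mul, card_filter_forall_card_fiber_ne_one, Fintype.card_subtype_compl,
      Fintype.card_subtype_compl, Fintype.card_coe, Fintype.card_coe, (mem_powersetCard.1 hA).2]
  rw [hK, card_filter_forall_mem_card_fiber_eq_one_and K (· ≠ 1), Nat.cast_sum,
    sum_congr rfl hterm, sum_const, card_powersetCard, card_univ, nsmul_eq_mul]
  ring

theorem card_filter_card_singletonFibers_eq (k : ℕ) :
    (#{f : α → β | #(singletonFibers f) = k} : ℝ) =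
      (Fintype.card β).choose k * (Fintype.card α).choose k * k.factorial *
        G (Fintype.card β - k) (Fintype.card α - k) := by
  have hterm : ∀ K ∈ powersetCard k (univ : Finset β),
      (#{f ∈ ({f : α → β | #(singletonFibers f) = k} : Finset _) | singletonFibers f = K} : ℝ) =
        (Fintype.card α).choose k * k.factorial * G (Fintype.card β - k) (Fintype.card α - k) := by
    intro K hK
    rw [filter_filter, ← (mem_powersetCard.1 hK).2, ← card_filter_singletonFibers_eq K]
    congr 2
    exact filter_congr fun f _ => ⟨fun h => h.2, fun h => ⟨h ▸ rfl, h⟩⟩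
  rw [card_eq_sum_card_fiberwise (f := singletonFibers) (t := powersetCard k univ)
    fun f hf => mem_powersetCard.2 ⟨subset_univ _, (mem_filter.1 hf).2⟩, Nat.cast_sum,
    sum_congr rfl hterm, sum_const, card_powersetCard, card_univ, nsmul_eq_mul]
  ring

end Counting

theorem card_exactly_k_singleton_fibers_general (h L k : ℕ) :
    (((univ.filter fun f : Fin h → Fin L =>
          (univ.filter fun l : Fin L =>
              (univ.filter fun i : Fin h => f i = l).card = 1).card = k).card : ℝ)
        = (L.choose k : ℝ) * (h.choose k : ℝ) * (Nat.factorial k : ℝ) * G (L - k) (h - k))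
    ∧
    (((univ.filter fun f : Fin h → Fin L =>
          (univ.filter fun l : Fin L =>
              (univ.filter fun i : Fin h => f i = l).card = 1).card = k).card : ℝ) / (L : ℝ) ^ h
        = (L.choose k : ℝ) * (h.choose k : ℝ) * (Nat.factorial k : ℝ) * G (L - k) (h - k)
            / (L : ℝ) ^ h) := by
  have hcount := card_filter_card_singletonFibers_eq (α := Fin h) (β := Fin L) k
  simp only [Fintype.card_fin] at hcount
  exact ⟨hcount, congrArg (· / (L : ℝ) ^ h) hcount⟩

/-- for `0 < k < min h L`, the number of functions `f : Fin h → Fin L` with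
exactly `k` singleton fibers equals `C(L,k) C(h,k) k! G(L-k, h-k)`; consequently the
probability `ξ_{hk}` that exactly `k` slots contain exactly one packet equals
`C(L,k) C(h,k) k! G(L-k, h-k) / L^h`. -/
theorem card_exactly_k_singleton_fibers (h L k : ℕ) (hk : 0 < k) (hk' : k < min h L) :
    (((univ.filter fun f : Fin h → Fin L =>
          (univ.filter fun l : Fin L =>
              (univ.filter fun i : Fin h => f i = l).card = 1).card = k).card : ℝ)
        = (L.choose k : ℝ) * (h.choose k : ℝ) * (Nat.factorial k : ℝ) * G (L - k) (h - k))
    ∧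
    (((univ.filter fun f : Fin h → Fin L =>
          (univ.filter fun l : Fin L =>
              (univ.filter fun i : Fin h => f i = l).card = 1).card = k).card : ℝ) / (L : ℝ) ^ h
        = (L.choose k : ℝ) * (h.choose k : ℝ) * (Nat.factorial k : ℝ) * G (L - k) (h - k)
            / (L : ℝ) ^ h) :=
  card_exactly_k_singleton_fibers_general h L k
end

section
/- For natural numbers k and L with 1 ≤ k ≤ L, the descending factorial ratio C(L,k)·k!/L^k = ∏_{j=0}^{k−1} (1 − j/L) satisfies C(L,k)·k!/L^k ≤ (1 − ⌊k/2⌋/L)^{⌈k/2⌉}. -/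
/-- for `1 ≤ k ≤ L`, the descending factorial ratio
`C(L,k) k! / L^k = ∏_{j=0}^{k-1} (1 - j/L)` and it is at most
`(1 - ⌊k/2⌋/L)^⌈k/2⌉`. -/
theorem descending_factorial_ratio_bound (k L : ℕ) (hk : 1 ≤ k) (hkL : k ≤ L) :
    ((L.choose k : ℝ) * (Nat.factorial k : ℝ) / (L : ℝ) ^ k
        = ∏ j ∈ Finset.range k, (1 - (j : ℝ) / (L : ℝ))) ∧
    ((L.choose k : ℝ) * (Nat.factorial k : ℝ) / (L : ℝ) ^ k
        ≤ (1 - ((k / 2 : ℕ) : ℝ) / (L : ℝ)) ^ ((k + 1) / 2 : ℕ)) := by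
  have hL : (0:ℝ) < L := by
    exact_mod_cast lt_of_lt_of_le hk hkL
  have heq : (L.choose k : ℝ) * (Nat.factorial k : ℝ) / (L : ℝ) ^ k
      = ∏ j ∈ Finset.range k, (1 - (j : ℝ) / (L : ℝ)) := by
    have hdesc : (L.descFactorial k : ℝ) = ∏ j ∈ Finset.range k, ((L : ℝ) - j) := by
      rw [Nat.descFactorial_eq_prod_range]
      push_cast [Finset.prod_natCast]
      refine Finset.prod_congr rfl fun j hj => ?_
      have : j ≤ L := le_of_lt (lt_of_lt_of_le (Finset.mem_range.mp hj) hkL)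
      push_cast [Nat.cast_sub this]
      ring
    have h1 : (L.choose k : ℝ) * (Nat.factorial k : ℝ) = (L.descFactorial k : ℝ) := by
      rw [Nat.descFactorial_eq_factorial_mul_choose]
      push_cast; ring
    rw [h1, hdesc, div_eq_iff (by positivity : ((L:ℝ))^k ≠ 0)]
    have : ((L:ℝ))^k = ∏ _j ∈ Finset.range k, (L:ℝ) := by
      simp [Finset.prod_const]
    rw [this, ← Finset.prod_mul_distrib]
    refine Finset.prod_congr rfl fun j hj => ?_
    field_simp
  refine ⟨heq, ?_⟩
  rw [heq]
  set m := k / 2 with hm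
  have hmk : m ≤ k := Nat.div_le_self k 2
  have hmL : (m : ℝ) / L ≤ 1 := by
    rw [div_le_one hL]
    exact_mod_cast le_trans hmk hkL
  have hnonneg : ∀ j ∈ Finset.range k, (0:ℝ) ≤ 1 - (j:ℝ)/L := by
    intro j hj
    have : (j:ℝ) ≤ L := by
      exact_mod_cast le_of_lt (lt_of_lt_of_le (Finset.mem_range.mp hj) hkL)
    have := div_le_one_of_le₀ this (le_of_lt hL)
    linarith
  rw [← Finset.prod_range_mul_prod_Ico (fun j : ℕ => (1 - (j:ℝ)/L)) hmk]
  have hA : ∏ j ∈ Finset.range m, (1 - (j:ℝ)/L) ≤ 1 := by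
    apply Finset.prod_le_one
    · intro j hj
      apply hnonneg
      exact Finset.mem_range.mpr (lt_of_lt_of_le (Finset.mem_range.mp hj) hmk)
    · intro j hj
      have : (0:ℝ) ≤ (j:ℝ)/L := by positivity
      linarith
  have hB : ∏ j ∈ Finset.Ico m k, (1 - (j:ℝ)/L) ≤ (1 - (m:ℝ)/L) ^ ((k+1)/2) := by
    have hcard : (Finset.Ico m k).card = (k+1)/2 := by
      rw [Nat.card_Ico]
      omega
    calc ∏ j ∈ Finset.Ico m k, (1 - (j:ℝ)/L)
        ≤ ∏ _j ∈ Finset.Ico m k, (1 - (m:ℝ)/L) := by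
          apply Finset.prod_le_prod
          · intro j hj
            apply hnonneg
            exact Finset.mem_range.mpr (Finset.mem_Ico.mp hj).2
          · intro j hj
            have : (m:ℝ)/L ≤ (j:ℝ)/L := by
              gcongr
              exact_mod_cast (Finset.mem_Ico.mp hj).1
            linarith
      _ = (1 - (m:ℝ)/L) ^ ((k+1)/2) := by rw [Finset.prod_const, hcard]
  have hBnn : (0:ℝ) ≤ ∏ j ∈ Finset.Ico m k, (1 - (j:ℝ)/L) := by
    apply Finset.prod_nonneg
    intro j hj
    apply hnonneg
    exact Finset.mem_range.mpr (Finset.mem_Ico.mp hj).2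
  calc (∏ j ∈ Finset.range m, (1 - (j:ℝ)/L)) * ∏ j ∈ Finset.Ico m k, (1 - (j:ℝ)/L)
      ≤ 1 * ∏ j ∈ Finset.Ico m k, (1 - (j:ℝ)/L) := by
        apply mul_le_mul_of_nonneg_right hA hBnn
    _ = ∏ j ∈ Finset.Ico m k, (1 - (j:ℝ)/L) := one_mul _
    _ ≤ _ := hB
end

section
/- Let θ be a real number with 0 < θ < 1. Let λ : ℕ → ℝ satisfy λ_n ≥ 0 for all n and ∑_{n=0}^{∞} n·λ_n < ∞. For each natural number h let ξ_h : ℕ → ℝ satisfy ξ_h(n) ≥ 0 for all n and ∑_{n=0}^{∞} ξ_h(n) ≤ 1. Then lim_{h→∞} (h+1)·∑_{k=1}^{∞} [ ((h+1)/(h+1+k))^{θ} − 1 + θk/(h+1) ] · ∑_{n=0}^{∞} λ_{n+k}·ξ_h(n) = 0, where each bracketed term is nonnegative. -/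
set_option maxHeartbeats 1000000

open Real Filter

private lemma drift_nonneg' {θ s : ℝ} (hθ0 : 0 < θ) (hθ1 : θ < 1) (hs : 0 ≤ s) :
    0 ≤ ((1+s)⁻¹) ^ θ - 1 + θ * s := by
  have h1s : (0:ℝ) < 1 + s := by linarith
  rw [Real.inv_rpow h1s.le]
  have hP : 0 < (1+s) ^ θ := Real.rpow_pos_of_pos h1s θ
  have hP1 : 1 ≤ (1+s) ^ θ := Real.one_le_rpow (by linarith) hθ0.le
  have hB : (1+s) ^ θ ≤ 1 + θ * s :=
    rpow_one_add_le_one_add_mul_self (by linarith) hθ0.le hθ1.le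
  have hinv : ((1+s) ^ θ)⁻¹ * ((1+s) ^ θ) = 1 := inv_mul_cancel₀ hP.ne'
  have hinvle : ((1+s) ^ θ)⁻¹ ≤ 1 := inv_le_one_of_one_le₀ hP1
  have hinvpos : 0 < ((1+s) ^ θ)⁻¹ := inv_pos.2 hP
  nlinarith [mul_le_mul_of_nonneg_left hB hinvpos.le, mul_nonneg (mul_nonneg hθ0.le hs) hs]

private lemma drift_le_lin' {θ s : ℝ} (hθ0 : 0 < θ) (hs : 0 ≤ s) :
    ((1+s)⁻¹) ^ θ - 1 + θ * s ≤ θ * s := by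
  have h1s : (0:ℝ) < 1 + s := by linarith
  have : ((1+s)⁻¹) ^ θ ≤ 1 :=
    Real.rpow_le_one (by positivity) (inv_le_one_of_one_le₀ (by linarith)) hθ0.le
  linarith

private lemma drift_le_sq' {θ s : ℝ} (hθ0 : 0 < θ) (hθ1 : θ < 1) (hs : 0 ≤ s) :
    ((1+s)⁻¹) ^ θ - 1 + θ * s ≤ θ * s ^ 2 := by
  have h1s : (0:ℝ) < 1 + s := by linarith
  have key : ((1+s)⁻¹) ^ θ = (1+s) ^ (1-θ) * (1+s)⁻¹ := by
    rw [Real.inv_rpow h1s.le, ← Real.rpow_neg h1s.le, show -θ = (1-θ) + (-1) by ring,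
      Real.rpow_add h1s, Real.rpow_neg_one]
  rw [key]
  have hB : (1+s) ^ (1-θ) ≤ 1 + (1-θ) * s :=
    rpow_one_add_le_one_add_mul_self (by linarith) (by linarith) (by linarith)
  have hinvpos : 0 < ((1+s))⁻¹ := inv_pos.2 h1s
  have h2 : (1+(1-θ)*s) * (1+s)⁻¹ ≤ 1 + θ*s^2 - θ*s := by
    rw [← div_eq_mul_inv, div_le_iff₀ h1s]
    nlinarith [mul_nonneg (mul_nonneg hθ0.le (mul_nonneg hs hs)) hs]
  have h3 := mul_le_mul_of_nonneg_right hB hinvpos.le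
  linarith

/-- with `0 < θ < 1`, nonnegative arrival probabilities `lam` with finite
mean `∑ n lam n < ∞`, and nonnegative `ξ h` with `∑_n ξ h n ≤ 1`, the upward drift term
`g'(h) + θ g(h) = (h+1) ∑_{k≥1} [((h+1)/(h+1+k))^θ - 1 + θk/(h+1)] ∑_n lam (n+k) ξ h n`
tends to `0` as `h → ∞`. -/
theorem upward_drift_term_tendsto_zero (θ : ℝ) (hθ0 : 0 < θ) (hθ1 : θ < 1)
    (lam : ℕ → ℝ) (hlam : ∀ n, 0 ≤ lam n)
    (hmean : Summable fun n : ℕ => (n : ℝ) * lam n)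
    (ξ : ℕ → ℕ → ℝ) (hξ : ∀ h n, 0 ≤ ξ h n)
    (hξs : ∀ h, Summable (ξ h)) (hξ1 : ∀ h, ∑' n : ℕ, ξ h n ≤ 1) :
    Filter.Tendsto
      (fun h : ℕ =>
        ((h : ℝ) + 1) *
          ∑' k : ℕ,
            ((((h : ℝ) + 1) / ((h : ℝ) + 1 + ((k : ℝ) + 1))) ^ θ - 1
                + θ * ((k : ℝ) + 1) / ((h : ℝ) + 1)) *
              ∑' n : ℕ, lam (n + (k + 1)) * ξ h n)
      Filter.atTop (nhds 0) := by
  -- basic facts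
  have hlam_sum : Summable lam := by
    have h1 : Summable (fun n : ℕ => lam (n + 1)) := by
      refine Summable.of_nonneg_of_le (fun n => hlam _) (fun n => ?_)
        ((summable_nat_add_iff 1).2 hmean)
      have h2 : (1:ℝ) ≤ ((n + 1 : ℕ) : ℝ) := by
        push_cast; linarith [Nat.cast_nonneg (α := ℝ) n]
      exact le_mul_of_one_le_left (hlam _) h2
    exact (summable_nat_add_iff 1).1 h1
  -- the coefficient
  set c : ℕ → ℕ → ℝ := fun h k =>
    (((h : ℝ) + 1) / ((h : ℝ) + 1 + ((k : ℝ) + 1))) ^ θ - 1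
      + θ * ((k : ℝ) + 1) / ((h : ℝ) + 1) with hc
  -- rewrite of the base
  have hbase : ∀ h k : ℕ,
      ((h : ℝ) + 1) / ((h : ℝ) + 1 + ((k : ℝ) + 1))
        = (1 + ((k : ℝ) + 1) / ((h : ℝ) + 1))⁻¹ := by
    intro h k
    have hH : (0:ℝ) < (h:ℝ) + 1 := by positivity
    rw [show (1 + ((k:ℝ)+1)/((h:ℝ)+1)) = (((h:ℝ)+1+((k:ℝ)+1))/((h:ℝ)+1)) by
      field_simp, inv_div]
  have hcval : ∀ h k : ℕ, c h k = (1 + ((k:ℝ)+1)/((h:ℝ)+1))⁻¹ ^ θ - 1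
      + θ * (((k:ℝ)+1)/((h:ℝ)+1)) := by
    intro h k
    simp only [hc, hbase h k]
    ring
  have hc_nonneg : ∀ h k : ℕ, 0 ≤ c h k := by
    intro h k
    have hs : 0 ≤ ((k:ℝ)+1)/((h:ℝ)+1) := by positivity
    rw [hcval h k]
    exact drift_nonneg' hθ0 hθ1 hs
  -- key upper bound on the coefficient
  have hc_upper : ∀ h k : ℕ, ((h:ℝ)+1) * c h k
      ≤ θ * min ((k:ℝ)+1) ((((k:ℝ)+1))^2/((h:ℝ)+1)) := by
    intro h k
    have hH : (0:ℝ) < (h:ℝ) + 1 := by positivity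
    have hH' : ((h:ℝ)+1) ≠ 0 := hH.ne'
    have hs : 0 ≤ ((k:ℝ)+1)/((h:ℝ)+1) := by positivity
    have hlin := drift_le_lin' hθ0 hs
    have hsq := drift_le_sq' hθ0 hθ1 hs
    rw [mul_min_of_nonneg _ _ hθ0.le]
    refine le_min ?_ ?_
    · have h1 : c h k ≤ θ * (((k:ℝ)+1)/((h:ℝ)+1)) := by rw [hcval h k]; linarith
      calc ((h:ℝ)+1) * c h k ≤ ((h:ℝ)+1) * (θ * (((k:ℝ)+1)/((h:ℝ)+1))) :=
            mul_le_mul_of_nonneg_left h1 hH.le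
        _ = θ * ((k:ℝ)+1) := by field_simp
    · have h1 : c h k ≤ θ * (((k:ℝ)+1)/((h:ℝ)+1)) ^ 2 := by rw [hcval h k]; linarith
      calc ((h:ℝ)+1) * c h k ≤ ((h:ℝ)+1) * (θ * (((k:ℝ)+1)/((h:ℝ)+1)) ^ 2) :=
            mul_le_mul_of_nonneg_left h1 hH.le
        _ = θ * ((((k:ℝ)+1))^2/((h:ℝ)+1)) := by field_simp
  -- the dominating sequence
  set e : ℕ → ℕ → ℝ := fun h m => θ * min ((m:ℝ)) (((m:ℝ))^2/((h:ℝ)+1)) * lam m with he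
  have he_nonneg : ∀ h m : ℕ, 0 ≤ e h m := by
    intro h m
    have h0 : 0 ≤ min ((m:ℝ)) (((m:ℝ))^2/((h:ℝ)+1)) := le_min (by positivity) (by positivity)
    exact mul_nonneg (mul_nonneg hθ0.le h0) (hlam m)
  have he_le : ∀ h m : ℕ, e h m ≤ θ * ((m:ℝ) * lam m) := by
    intro h m
    simp only [he]
    have h1 : min ((m:ℝ)) (((m:ℝ))^2/((h:ℝ)+1)) ≤ (m:ℝ) := min_le_left _ _
    calc θ * min ((m:ℝ)) (((m:ℝ))^2/((h:ℝ)+1)) * lam m ≤ θ * (m:ℝ) * lam m :=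
          mul_le_mul_of_nonneg_right (mul_le_mul_of_nonneg_left h1 hθ0.le) (hlam m)
      _ = θ * ((m:ℝ) * lam m) := by ring
  have he_sum : ∀ h : ℕ, Summable (e h) := fun h =>
    Summable.of_nonneg_of_le (he_nonneg h) (he_le h) (hmean.mul_left θ)
  set D : ℕ → ℝ := fun h => ∑' m : ℕ, e h m with hD
  have hD_nonneg : ∀ h : ℕ, 0 ≤ D h := fun h => tsum_nonneg (he_nonneg h)
  -- inner sums are summable
  have hS_sum : ∀ h k : ℕ, Summable (fun n : ℕ => lam (n + (k+1)) * ξ h n) := by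
    intro h k
    refine Summable.of_nonneg_of_le (fun n => mul_nonneg (hlam _) (hξ h n)) (fun n => ?_)
      ((hξs h).mul_left (∑' m, lam m))
    exact mul_le_mul_of_nonneg_right
      (Summable.le_tsum hlam_sum _ (fun j _ => hlam j)) (hξ h n)
  have hS_nonneg : ∀ h k : ℕ, 0 ≤ ∑' n : ℕ, lam (n + (k+1)) * ξ h n := fun h k =>
    tsum_nonneg (fun n => mul_nonneg (hlam _) (hξ h n))
  -- nonnegativity of the whole expression
  have hF0 : ∀ h : ℕ, 0 ≤ ((h : ℝ) + 1) *
      ∑' k : ℕ, c h k * ∑' n : ℕ, lam (n + (k + 1)) * ξ h n := by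
    intro h
    exact mul_nonneg (by positivity)
      (tsum_nonneg fun k => mul_nonneg (hc_nonneg h k) (hS_nonneg h k))
  -- the central bound F h ≤ D h
  have hFD : ∀ h : ℕ, ((h : ℝ) + 1) *
      (∑' k : ℕ, c h k * ∑' n : ℕ, lam (n + (k + 1)) * ξ h n) ≤ D h := by
    intro h
    have hH : (0:ℝ) < (h:ℝ) + 1 := by positivity
    -- the swapped dominating function on pairs (n, k)
    set g1 : ℕ × ℕ → ℝ := fun p => e h (p.1 + (p.2 + 1)) * ξ h p.1 with hg1def
    have hg1_nonneg : (0 : ℕ × ℕ → ℝ) ≤ g1 := fun p =>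
      mul_nonneg (he_nonneg h _) (hξ h _)
    have hshift_sum : ∀ n : ℕ, Summable fun k : ℕ => e h (n + (k+1)) := by
      intro n
      refine ((summable_nat_add_iff (n+1)).2 (he_sum h)).congr (fun k => ?_)
      rw [show k + (n+1) = n + (k+1) from by omega]
    have hg1inner : ∀ n : ℕ, Summable fun k => g1 (n, k) := by
      intro n
      simp only [hg1def]
      exact (hshift_sum n).mul_right _
    have hshift_le : ∀ n : ℕ, (∑' k : ℕ, e h (n + (k+1))) ≤ D h := by
      intro n
      refine Summable.tsum_le_tsum_of_inj (fun k => n + (k+1))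
        (fun a b hab => by simpa using hab) (fun m _ => he_nonneg h m) (fun k => le_rfl)
        (hshift_sum n) (he_sum h)
    have hg1inner_eq : ∀ n : ℕ,
        (∑' k, g1 (n, k)) = ξ h n * ∑' k : ℕ, e h (n + (k+1)) := by
      intro n
      rw [mul_comm, ← tsum_mul_right]
    have hg1outer : Summable fun n => ∑' k, g1 (n, k) := by
      refine Summable.of_nonneg_of_le
        (fun n => tsum_nonneg (fun k => hg1_nonneg (n, k)))
        (fun n => ?_) ((hξs h).mul_right (D h))
      rw [hg1inner_eq n]
      exact mul_le_mul_of_nonneg_left (hshift_le n) (hξ h n)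
    have hg1sum : Summable g1 :=
      (summable_prod_of_nonneg hg1_nonneg).2 ⟨hg1inner, hg1outer⟩
    have hg1swap : Summable fun p : ℕ × ℕ => g1 (p.2, p.1) :=
      (Equiv.prodComm ℕ ℕ).summable_iff.2 hg1sum
    -- the original function on pairs (k, n)
    set f0 : ℕ × ℕ → ℝ := fun p =>
      ((h:ℝ)+1) * c h p.1 * (lam (p.2 + (p.1 + 1)) * ξ h p.2) with hf0def
    have hpt : ∀ p : ℕ × ℕ, f0 p ≤ g1 (p.2, p.1) := by
      rintro ⟨k, n⟩
      simp only [hf0def, hg1def]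
      have hcast : (((n + (k+1) : ℕ)):ℝ) = (n:ℝ) + ((k:ℝ)+1) := by push_cast; ring
      have hmono : min ((k:ℝ)+1) ((((k:ℝ)+1))^2/((h:ℝ)+1))
          ≤ min (((n + (k+1) : ℕ)):ℝ) ((((n + (k+1) : ℕ)):ℝ)^2/((h:ℝ)+1)) := by
        rw [hcast]
        refine min_le_min (by linarith [Nat.cast_nonneg (α := ℝ) n]) ?_
        have hsq2 : ((k:ℝ)+1)^2 ≤ ((n:ℝ) + ((k:ℝ)+1))^2 := by
          nlinarith [Nat.cast_nonneg (α := ℝ) n, Nat.cast_nonneg (α := ℝ) k]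
        exact div_le_div_of_nonneg_right hsq2 hH.le
      have h1 : ((h:ℝ)+1) * c h k ≤ θ * min (((n + (k+1) : ℕ)):ℝ)
          ((((n + (k+1) : ℕ)):ℝ)^2/((h:ℝ)+1)) :=
        (hc_upper h k).trans (mul_le_mul_of_nonneg_left hmono hθ0.le)
      have h2 : 0 ≤ lam (n + (k+1)) * ξ h n := mul_nonneg (hlam _) (hξ h n)
      calc ((h:ℝ)+1) * c h k * (lam (n + (k+1)) * ξ h n)
          ≤ (θ * min (((n + (k+1) : ℕ)):ℝ) ((((n + (k+1) : ℕ)):ℝ)^2/((h:ℝ)+1)))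
            * (lam (n + (k+1)) * ξ h n) := mul_le_mul_of_nonneg_right h1 h2
        _ = e h (n + (k+1)) * ξ h n := by simp only [he]; ring
    have hf0_nonneg : ∀ p : ℕ × ℕ, 0 ≤ f0 p := fun p =>
      mul_nonneg (mul_nonneg hH.le (hc_nonneg h p.1))
        (mul_nonneg (hlam _) (hξ h _))
    have hf0sum : Summable f0 :=
      Summable.of_nonneg_of_le hf0_nonneg hpt hg1swap
    have hf0inner : ∀ k : ℕ, Summable fun n => f0 (k, n) := by
      intro k
      simp only [hf0def]
      exact (hS_sum h k).mul_left _
    -- identify F h with the sum over pairs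
    have hFeq : ((h : ℝ) + 1) *
        (∑' k : ℕ, c h k * ∑' n : ℕ, lam (n + (k + 1)) * ξ h n) = ∑' p, f0 p := by
      rw [Summable.tsum_prod' hf0sum hf0inner, ← tsum_mul_left]
      refine tsum_congr (fun k => ?_)
      have h3 : (∑' n, f0 (k, n))
          = (((h:ℝ)+1) * c h k) * ∑' n : ℕ, lam (n + (k+1)) * ξ h n := by
        simp only [hf0def]
        exact tsum_mul_left
      rw [h3]
      ring
    rw [hFeq]
    calc (∑' p, f0 p) ≤ ∑' p : ℕ × ℕ, g1 (p.2, p.1) :=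
          Summable.tsum_le_tsum hpt hf0sum hg1swap
      _ = ∑' p, g1 p := (Equiv.prodComm ℕ ℕ).tsum_eq g1
      _ = ∑' n, ∑' k, g1 (n, k) := Summable.tsum_prod' hg1sum hg1inner
      _ ≤ ∑' n, ξ h n * D h := by
          refine Summable.tsum_le_tsum (fun n => ?_) hg1outer ((hξs h).mul_right (D h))
          rw [hg1inner_eq n]
          exact mul_le_mul_of_nonneg_left (hshift_le n) (hξ h n)
      _ = (∑' n, ξ h n) * D h := tsum_mul_right
      _ ≤ 1 * D h := mul_le_mul_of_nonneg_right (hξ1 h) (hD_nonneg h)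
      _ = D h := one_mul _
  -- D h → 0 by dominated convergence
  have hDlim : Tendsto D atTop (nhds 0) := by
    have h0 : (0:ℝ) = ∑' m : ℕ, (0:ℝ) := tsum_zero.symm
    rw [hD, h0]
    refine tendsto_tsum_of_dominated_convergence
      (bound := fun m : ℕ => θ * ((m:ℝ) * lam m)) (hmean.mul_left θ) (fun m => ?_) ?_
    · -- pointwise convergence to 0
      have hup : Tendsto (fun h : ℕ => (θ * (m:ℝ)^2 * lam m) * (1/((h:ℝ)+1)))
          atTop (nhds 0) := by
        have h4 := tendsto_one_div_add_atTop_nhds_zero_nat.const_mul (θ * (m:ℝ)^2 * lam m)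
        simpa using h4
      refine squeeze_zero (fun h => he_nonneg h m) (fun h => ?_) hup
      have h1 : min ((m:ℝ)) (((m:ℝ))^2/((h:ℝ)+1)) ≤ ((m:ℝ))^2/((h:ℝ)+1) :=
        min_le_right _ _
      calc e h m ≤ θ * (((m:ℝ))^2/((h:ℝ)+1)) * lam m := by
            simp only [he]
            exact mul_le_mul_of_nonneg_right (mul_le_mul_of_nonneg_left h1 hθ0.le) (hlam m)
        _ = (θ * (m:ℝ)^2 * lam m) * (1/((h:ℝ)+1)) := by ring
    · refine Filter.Eventually.of_forall (fun h m => ?_)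
      rw [Real.norm_eq_abs, abs_of_nonneg (he_nonneg h m)]
      exact he_le h m
  exact squeeze_zero hF0 hFD hDlim
end
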